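/- Explicit inverse of D: for σ > 0, q ∈ (0,1], and θ > σ q^{1/4}, the unique z > σ(1+√q) with D(z) = 1/θ² is z = √((θ² + σ²)(θ² + σ² q))/θ. -/
import Mathlib

set_option maxHeartbeats 1000000


theorem D_inverse_explicit (σ q θ : ℝ) (hσ : 0 < σ) (hq : 0 < q) (hq1 : q ≤ 1)
    (hθ : θ > σ * q ^ ((1:ℝ)/4)) :
    let D : ℝ → ℝ := fun z => (z ^ 2 - σ ^ 2 * (q + 1) -
      Real.sqrt ((z ^ 2 - σ ^ 2 * (q + 1)) ^ 2 - 4 * σ ^ 4 * q)) / (2 * σ ^ 4 * q)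
    let z₀ : ℝ := Real.sqrt ((θ ^ 2 + σ ^ 2) * (θ ^ 2 + σ ^ 2 * q)) / θ
    z₀ > σ * (1 + Real.sqrt q) ∧ D z₀ = 1 / θ ^ 2 ∧
      ∀ z > σ * (1 + Real.sqrt q), D z = 1 / θ ^ 2 → z = z₀ := by
  intro D z₀
  have hq4 : 0 < q ^ ((1:ℝ)/4) := Real.rpow_pos_of_pos hq _
  have hθ0 : 0 < θ := lt_trans (by positivity) hθ
  have hpow : (q ^ ((1:ℝ)/4)) ^ (4:ℕ) = q := by
    rw [← Real.rpow_natCast (q ^ ((1:ℝ)/4)) 4, ← Real.rpow_mul hq.le]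
    norm_num
  have hθ4 : σ ^ 4 * q < θ ^ 4 := by
    have := pow_lt_pow_left₀ hθ (by positivity) (by norm_num : (4:ℕ) ≠ 0)
    calc σ ^ 4 * q = (σ * q ^ ((1:ℝ)/4)) ^ 4 := by rw [mul_pow, hpow]
      _ < θ ^ 4 := this
  have hsq : Real.sqrt q ^ 2 = q := Real.sq_sqrt hq.le
  have hsqpos : 0 < Real.sqrt q := Real.sqrt_pos.2 hq
  have hA : (0:ℝ) < (θ ^ 2 + σ ^ 2) * (θ ^ 2 + σ ^ 2 * q) := by positivity
  have hz₀sq : z₀ ^ 2 = (θ ^ 2 + σ ^ 2) * (θ ^ 2 + σ ^ 2 * q) / θ ^ 2 := by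
    show (Real.sqrt _ / θ) ^ 2 = _
    rw [div_pow, Real.sq_sqrt hA.le]
  have hz₀pos : 0 < z₀ := by
    have : 0 < Real.sqrt ((θ ^ 2 + σ ^ 2) * (θ ^ 2 + σ ^ 2 * q)) := Real.sqrt_pos.2 hA
    exact div_pos this hθ0
  have hθ2 : θ ^ 2 ≠ 0 := by positivity
  -- θ² > σ²√q
  have hθ2gt : σ ^ 2 * Real.sqrt q < θ ^ 2 := by
    by_contra h
    push_neg at h
    have h4 : (θ ^ 2) ^ 2 ≤ (σ ^ 2 * Real.sqrt q) ^ 2 :=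
      pow_le_pow_left₀ (sq_nonneg θ) h 2
    nlinarith [hsq]
  have h1 : z₀ > σ * (1 + Real.sqrt q) := by
    have hlt : (σ * (1 + Real.sqrt q)) ^ 2 < z₀ ^ 2 := by
      rw [hz₀sq, lt_div_iff₀ (by positivity : (0:ℝ) < θ ^ 2)]
      have hkey : σ ^ 2 * θ ^ 2 * Real.sqrt q ^ 2 = σ ^ 2 * θ ^ 2 * q := by rw [hsq]
      have hkey2 : σ ^ 4 * Real.sqrt q ^ 2 = σ ^ 4 * q := by rw [hsq]
      nlinarith [mul_pos (sub_pos.2 hθ2gt) (sub_pos.2 hθ2gt), hkey, hkey2]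
    exact lt_of_pow_lt_pow_left₀ 2 hz₀pos.le hlt
  refine ⟨h1, ?_, ?_⟩
  · -- D z₀ = 1/θ²
    have hw : z₀ ^ 2 - σ ^ 2 * (q + 1) = θ ^ 2 + σ ^ 4 * q / θ ^ 2 := by
      rw [hz₀sq]; field_simp; ring
    have harg : (z₀ ^ 2 - σ ^ 2 * (q + 1)) ^ 2 - 4 * σ ^ 4 * q
        = (θ ^ 2 - σ ^ 4 * q / θ ^ 2) ^ 2 := by
      rw [hw]; field_simp; ring
    have hnn : 0 ≤ θ ^ 2 - σ ^ 4 * q / θ ^ 2 := by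
      rw [sub_nonneg, div_le_iff₀ (by positivity : (0:ℝ) < θ ^ 2)]
      nlinarith
    show (z₀ ^ 2 - σ ^ 2 * (q + 1) - Real.sqrt _) / (2 * σ ^ 4 * q) = 1 / θ ^ 2
    rw [harg, Real.sqrt_sq hnn, hw]
    field_simp
    ring
  · intro z hz hDz
    have hDzraw : (z ^ 2 - σ ^ 2 * (q + 1) -
        Real.sqrt ((z ^ 2 - σ ^ 2 * (q + 1)) ^ 2 - 4 * σ ^ 4 * q)) / (2 * σ ^ 4 * q)
        = 1 / θ ^ 2 := hDz
    clear hDz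
    clear_value D z₀
    clear D
    have hz0 : 0 < z := lt_trans (by positivity) hz
    have hzsq : σ ^ 2 * (1 + Real.sqrt q) ^ 2 < z ^ 2 := by
      have := pow_lt_pow_left₀ hz (by positivity) (by norm_num : (2:ℕ) ≠ 0)
      nlinarith
    have hwgt : 2 * σ ^ 2 * Real.sqrt q < z ^ 2 - σ ^ 2 * (q + 1) := by
      nlinarith
    have h2pos : (0:ℝ) < 2 * σ ^ 2 * Real.sqrt q := by positivity
    have hargpos : 0 ≤ (z ^ 2 - σ ^ 2 * (q + 1)) ^ 2 - 4 * σ ^ 4 * q := by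
      have hmm := mul_lt_mul'' hwgt hwgt h2pos.le h2pos.le
      have hval : (2 * σ ^ 2 * Real.sqrt q) * (2 * σ ^ 2 * Real.sqrt q) = 4 * σ ^ 4 * q := by
        linear_combination 4 * σ ^ 4 * hsq
      nlinarith [hmm, hval]
    have hssq : Real.sqrt ((z ^ 2 - σ ^ 2 * (q + 1)) ^ 2 - 4 * σ ^ 4 * q) ^ 2
        = (z ^ 2 - σ ^ 2 * (q + 1)) ^ 2 - 4 * σ ^ 4 * q := Real.sq_sqrt hargpos
    have hc : (2 * σ ^ 4 * q / θ ^ 2) * θ ^ 2 = 2 * σ ^ 4 * q := div_mul_cancel₀ _ hθ2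
    have hDz' : z ^ 2 - σ ^ 2 * (q + 1) -
        Real.sqrt ((z ^ 2 - σ ^ 2 * (q + 1)) ^ 2 - 4 * σ ^ 4 * q)
        = 2 * σ ^ 4 * q / θ ^ 2 := by
      have h2σ : (0:ℝ) < 2 * σ ^ 4 * q := by positivity
      have hth : (0:ℝ) < θ ^ 2 := by positivity
      have hthis : (z ^ 2 - σ ^ 2 * (q + 1) -
          Real.sqrt ((z ^ 2 - σ ^ 2 * (q + 1)) ^ 2 - 4 * σ ^ 4 * q)) / (2 * σ ^ 4 * q)
          = 1 / θ ^ 2 := hDzraw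
      rw [div_eq_div_iff h2σ.ne' hth.ne'] at hthis
      rw [eq_div_iff hθ2]
      linarith
    set c : ℝ := 2 * σ ^ 4 * q / θ ^ 2 with hcdef
    have hseq : Real.sqrt ((z ^ 2 - σ ^ 2 * (q + 1)) ^ 2 - 4 * σ ^ 4 * q)
        = z ^ 2 - σ ^ 2 * (q + 1) - c := by linarith
    have hsq2 : (z ^ 2 - σ ^ 2 * (q + 1)) ^ 2 - 4 * σ ^ 4 * q
        = (z ^ 2 - σ ^ 2 * (q + 1) - c) ^ 2 := by rw [← hseq, hssq]
    have h4 : 2 * (z ^ 2 - σ ^ 2 * (q + 1)) * c - c ^ 2 = 4 * σ ^ 4 * q := by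
      linear_combination hsq2
    have h6 : (4 * σ ^ 4 * q) * ((z ^ 2 - σ ^ 2 * (q + 1)) * θ ^ 2)
        = (4 * σ ^ 4 * q) * (θ ^ 4 + σ ^ 4 * q) := by
      linear_combination θ ^ 4 * h4 - (2 * (z ^ 2 - σ ^ 2 * (q + 1)) * θ ^ 2
        - c * θ ^ 2 - 2 * σ ^ 4 * q) * hc
    have h5 : (z ^ 2 - σ ^ 2 * (q + 1)) * θ ^ 2 = θ ^ 4 + σ ^ 4 * q :=
      mul_left_cancel₀ (by positivity) h6
    have hzz : z ^ 2 = z₀ ^ 2 := by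
      rw [hz₀sq, eq_div_iff hθ2]
      linear_combination h5
    calc z = Real.sqrt (z ^ 2) := (Real.sqrt_sq hz0.le).symm
      _ = Real.sqrt (z₀ ^ 2) := by rw [hzz]
      _ = z₀ := Real.sqrt_sq hz₀pos.le
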